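/- Let M be an m×n matrix over {0,1} in which every column contains at most w entries equal to 1, and suppose the fairlet size satisfies c̃ ≥ 2w. Then for any integers k ≥ 0 and r ≥ 1, there exists an m×n matrix M' over {0,1} that is fair w.r.t. γ with dr(M') ≤ r and d(M,M') ≤ k if and only if k is at least the number of entries of M equal to 1. (In particular, every matrix M' over {0,1} that is fair w.r.t. γ satisfies d(M,M') ≥ #{(i,j) : M[i,j] = 1}, and equality is attained by the all-zero matrix, which is fair and has a single distinct row.) -/

import Mathlib

variable {m n c : ℕ} {A : Type*} [Fintype A] [DecidableEq A]

/-- The set of distinct row types of a matrix. -/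
def types (M : Fin m → Fin n → A) : Finset (Fin n → A) :=
  Finset.univ.image (fun i => M i)

/-- The number of distinct rows of a matrix. -/
def dr (M : Fin m → Fin n → A) : ℕ := (types M).card

/-- The cluster of a type `τ` in `M`: the set of rows whose type is `τ`. -/
def cluster (M : Fin m → Fin n → A) (τ : Fin n → A) : Finset (Fin m) :=
  Finset.univ.filter (fun i => M i = τ)

/-- The edit cost between two matrices: the number of positions where they differ. -/
def editCost (M M' : Fin m → Fin n → A) : ℕ :=
  ((Finset.univ : Finset (Fin m × Fin n)).filter (fun p => M p.1 p.2 ≠ M' p.1 p.2)).card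

/-- The number of occurrences of color `z` in the coloring `γ`. -/
def colorCount (γ : Fin m → Fin c) (z : Fin c) : ℕ :=
  (Finset.univ.filter (fun i => γ i = z)).card

/-- A set of rows is fair w.r.t. `γ` if it witnesses the same color distribution as `γ`. -/
def fairSet (γ : Fin m → Fin c) (S : Finset (Fin m)) : Prop :=
  ∀ z : Fin c, m * (S.filter (fun i => γ i = z)).card = colorCount γ z * S.card

/-- A matrix is fair if the cluster of each of its types is fair. -/
def fairMatrix (γ : Fin m → Fin c) (M' : Fin m → Fin n → A) : Prop :=
  ∀ τ ∈ types M', fairSet γ (cluster M' τ)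

/-- The fairlet size `c̃ = m / gcd(|γ|_1, …, |γ|_c)`. -/
def fairletSize (γ : Fin m → Fin c) : ℕ :=
  m / Finset.univ.gcd (colorCount γ)

/-!
Work column by column. If column `j` of `M'` is zero, it costs exactly the ones of `M` there.
Otherwise some row of `M'` has a one in column `j`, and so does its whole cluster, a nonempty fair
set, whose size is therefore a multiple of `c̃ ≥ 2w`; as `M` has at most `w` ones in the column,
at least `w` of the ones of `M'` there are edits. So every fair `M'` costs at least the number of
ones of `M`, and the zero matrix, fair with a single row type, attains this.
-/

open Finset

lemma sum_colorCount (γ : Fin m → Fin c) : ∑ z, colorCount γ z = m := by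
  simpa [colorCount] using
    (card_eq_sum_card_fiberwise (f := γ) (s := univ) (t := univ) fun _ _ => mem_univ _).symm

lemma gcd_colorCount_dvd (γ : Fin m → Fin c) : univ.gcd (colorCount γ) ∣ m := by
  conv_rhs => rw [← sum_colorCount γ]
  exact dvd_sum fun z _ => Finset.gcd_dvd (mem_univ z)

lemma colorCount_pos (γ : Fin m → Fin c) (i : Fin m) : 0 < colorCount γ (γ i) :=
  card_pos.mpr ⟨i, by simp⟩

lemma fairletSize_le_card {γ : Fin m → Fin c} {S : Finset (Fin m)} (hS : fairSet γ S)
    (hne : S.Nonempty) : fairletSize γ ≤ #S := by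
  obtain ⟨i, hi⟩ := hne
  have hg : 0 < univ.gcd (colorCount γ) :=
    Nat.pos_of_dvd_of_pos (Finset.gcd_dvd (mem_univ (γ i))) (colorCount_pos γ i)
  have hm : m ∣ univ.gcd (colorCount γ) * #S := by
    have : m ∣ univ.gcd fun z => colorCount γ z * #S := dvd_gcd fun z _ => ⟨_, (hS z).symm⟩
    simpa [Finset.gcd_mul_right] using this
  exact Nat.le_of_dvd (card_pos.mpr ⟨i, hi⟩) <|
    (Nat.div_dvd_iff_dvd_mul (gcd_colorCount_dvd γ) hg).mpr hm

lemma fairletSize_le_card_filter {α : Type*} [DecidableEq α] {γ : Fin m → Fin c}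
    {M' : Fin m → Fin n → α} (hM' : fairMatrix γ M') {P : (Fin n → α) → Prop} [DecidablePred P]
    {i : Fin m} (hi : P (M' i)) : fairletSize γ ≤ #{i' | P (M' i')} := by
  have hcluster : cluster M' (M' i) ⊆ ({i' | P (M' i')} : Finset (Fin m)) := fun i' hi' => by
    simp_all [cluster]
  exact (fairletSize_le_card (hM' _ (mem_image_of_mem _ (mem_univ i)))
    ⟨i, by simp [cluster]⟩).trans (card_le_card hcluster)

lemma card_le_card_symmDiff {α : Type*} [DecidableEq α] {s t : Finset α}
    (h : t.Nonempty → 2 * #s ≤ #t) : #s ≤ #(symmDiff s t) := by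
  rcases t.eq_empty_or_nonempty with rfl | ht
  · rw [← bot_eq_empty, symmDiff_bot]
  · calc #s ≤ #t - #s := by have := h ht; omega
      _ ≤ #(t \ s) := le_card_sdiff s t
      _ ≤ #(symmDiff s t) := card_le_card (by rw [symmDiff_def]; exact le_sup_right)

lemma filter_ne_eq_symmDiff {ι : Type*} [Fintype ι] [DecidableEq ι] (f g : ι → Fin 2) :
    ({i | f i ≠ g i} : Finset ι) =
      symmDiff ({i | f i = 1} : Finset ι) ({i | g i = 1} : Finset ι) := by
  ext i
  simp only [mem_filter, mem_univ, true_and, mem_symmDiff]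
  generalize f i = a
  generalize g i = b
  revert a b
  decide

lemma card_filter_prod_eq_sum {ι κ : Type*} [Fintype ι] [Fintype κ] (P : ι → κ → Prop)
    [∀ i j, Decidable (P i j)] :
    #({p | P p.1 p.2} : Finset (ι × κ)) = ∑ j, #{i | P i j} := by
  simp only [card_filter]
  rw [Fintype.sum_prod_type, sum_comm]

lemma fairSet_univ (γ : Fin m → Fin c) : fairSet γ univ := fun z => by
  simp [colorCount, mul_comm]

lemma fairMatrix_const {α : Type*} [DecidableEq α] (γ : Fin m → Fin c) (τ : Fin n → α) :
    fairMatrix γ fun _ => τ := fun τ' hτ' => by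
  obtain ⟨i, -, rfl⟩ := mem_image.mp hτ'
  simpa [cluster] using fairSet_univ γ

lemma dr_const_le_one {α : Type*} [DecidableEq α] (τ : Fin n → α) :
    dr (fun _ : Fin m => τ) ≤ 1 :=
  card_le_one.mpr fun a ha b hb => by
    obtain ⟨_, -, rfl⟩ := mem_image.mp ha
    obtain ⟨_, -, rfl⟩ := mem_image.mp hb
    rfl

lemma editCost_zero_right (M : Fin m → Fin n → Fin 2) :
    editCost M 0 = #({p | M p.1 p.2 = 1} : Finset (Fin m × Fin n)) := by
  have h : ∀ a : Fin 2, a ≠ 0 ↔ a = 1 := by decide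
  simp [editCost, h]

lemma card_ones_le_card_ne {γ : Fin m → Fin c} {M M' : Fin m → Fin n → Fin 2} {w : ℕ}
    (hM' : fairMatrix γ M') (hc : 2 * w ≤ fairletSize γ) (j : Fin n)
    (hw : #{i | M i j = 1} ≤ w) : #{i | M i j = 1} ≤ #{i | M i j ≠ M' i j} := by
  rw [filter_ne_eq_symmDiff (M · j) (M' · j)]
  refine card_le_card_symmDiff fun ⟨i, hi⟩ => ?_
  calc 2 * #{i | M i j = 1} ≤ 2 * w := by omega
    _ ≤ fairletSize γ := hc
    _ ≤ #{i' | M' i' j = 1} :=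
      fairletSize_le_card_filter hM' (P := fun τ => τ j = 1) (mem_filter.mp hi).2

theorem sparse_binary_solvable_iff_general (γ : Fin m → Fin c)
    (M : Fin m → Fin n → Fin 2) (w k r : ℕ) (hr : 1 ≤ r)
    (hw : ∀ j : Fin n, (Finset.univ.filter (fun i : Fin m => M i j = 1)).card ≤ w)
    (hc : 2 * w ≤ fairletSize γ) :
    (∃ M' : Fin m → Fin n → Fin 2, fairMatrix γ M' ∧ dr M' ≤ r ∧ editCost M M' ≤ k) ↔
      ((Finset.univ : Finset (Fin m × Fin n)).filter (fun p => M p.1 p.2 = 1)).card ≤ k := by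
  constructor
  · rintro ⟨M', hM', -, hcost⟩
    calc #({p | M p.1 p.2 = 1} : Finset (Fin m × Fin n)) = ∑ j, #{i | M i j = 1} :=
        card_filter_prod_eq_sum fun i j => M i j = 1
      _ ≤ ∑ j, #{i | M i j ≠ M' i j} :=
        sum_le_sum fun j _ => card_ones_le_card_ne hM' hc j (hw j)
      _ = editCost M M' := (card_filter_prod_eq_sum fun i j => M i j ≠ M' i j).symm
      _ ≤ k := hcost
  · intro hk
    exact ⟨0, fairMatrix_const γ 0, (dr_const_le_one 0).trans hr,
      (editCost_zero_right M).trans_le hk⟩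

/-- For binary matrices with at most `w` ones per column and
fairlet size at least `2w`, the instance is solvable iff the budget covers
all ones of `M`. -/
theorem sparse_binary_solvable_iff (hm : 0 < m) (hn : 0 < n)
    (γ : Fin m → Fin c) (hγ : Function.Surjective γ)
    (M : Fin m → Fin n → Fin 2) (w k r : ℕ) (hr : 1 ≤ r)
    (hw : ∀ j : Fin n, (Finset.univ.filter (fun i : Fin m => M i j = 1)).card ≤ w)
    (hc : 2 * w ≤ fairletSize γ) :
    (∃ M' : Fin m → Fin n → Fin 2, fairMatrix γ M' ∧ dr M' ≤ r ∧ editCost M M' ≤ k) ↔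
      ((Finset.univ : Finset (Fin m × Fin n)).filter (fun p => M p.1 p.2 = 1)).card ≤ k :=
  sparse_binary_solvable_iff_general γ M w k r hr hw hc
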